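/- The function ω on SL₂(ℝ) × SL₂(ℝ) defined via the principal logarithm of automorphy factors satisfies the 2-cocycle identity: ω(g₁, g₂) + ω(g₁g₂, g₃) = ω(g₁, g₂g₃) + ω(g₂, g₃) for all g₁, g₂, g₃ ∈ SL₂(ℝ). -/

import Mathlib

open Matrix UpperHalfPlane Complex

abbrev SL2R := Matrix.SpecialLinearGroup (Fin 2) ℝ

/-- The automorphy factor `j(g,z) = cz + d`. -/
noncomputable def jFac (g : SL2R) (z : ℂ) : ℂ :=
  (g.1 1 0 : ℝ) * z + (g.1 1 1 : ℝ)

/-- Petersson's 2-cocycle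
`ω(g,h) = (1/(2πi))(Log j(g, h·z) + Log j(h,z) − Log j(gh,z))`. -/
noncomputable def omegaC (g h : SL2R) (z : ℍ) : ℂ :=
  (1 / (2 * Real.pi * Complex.I)) *
    (Complex.log (jFac g ((h • z : ℍ) : ℂ)) + Complex.log (jFac h (z : ℂ))
      - Complex.log (jFac (g * h) (z : ℂ)))

/-! The factor of automorphy satisfies `j(gh, z) = j(g, h·z) j(h, z)`, so the exponential of
`2πi ω(g, h)(z)` is `1`. Being continuous on the connected space `ℍ` with values in the discrete
set `2πiℤ`, `ω(g, h)(z)` does not depend on `z`. Evaluating `ω(g₁, g₂)` at `g₃·z` instead of `z`,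
the cocycle identity becomes a cancellation of logarithms. -/

lemma Complex.isDiscrete_setOf_exp_eq_one : IsDiscrete {w : ℂ | exp w = 1} := by
  have hrange : {w : ℂ | exp w = 1} = Set.range fun n : ℤ => (n : ℂ) * (2 * Real.pi * I) := by
    ext w
    simp [exp_eq_one_iff, eq_comm]
  have hinducing : Topology.IsInducing fun n : ℤ => (n : ℂ) * (2 * Real.pi * I) := by
    have h2πI : (2 * Real.pi * I : ℂ) ≠ 0 := by simp [Real.pi_ne_zero]
    have := (Homeomorph.mulRight₀ _ h2πI).isInducing.comp
      (isometry_ofReal.isEmbedding.isInducing.comp Int.isClosedEmbedding_coe_real.isInducing)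
    simpa [Function.comp_def] using this
  rw [hrange]
  exact hinducing.isDiscrete_range

lemma PreconnectedSpace.eq_of_continuous_of_exp_eq_one {X : Type*} [TopologicalSpace X]
    [PreconnectedSpace X] {f : X → ℂ} (hf : Continuous f) (hexp : ∀ x, exp (f x) = 1) (x y : X) :
    f x = f y :=
  isPreconnected_univ.constant_of_mapsTo Complex.isDiscrete_setOf_exp_eq_one hf.continuousOn
    (fun u _ => hexp u) trivial trivial

lemma jFac_ne_zero (g : SL2R) (z : ℍ) : jFac g z ≠ 0 :=
  denom_ne_zero (g : GL (Fin 2) ℝ) z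

lemma jFac_mul (g h : SL2R) (z : ℍ) : jFac (g * h) z = jFac g (h • z : ℍ) * jFac h z := by
  have hdet : 0 < (h : GL (Fin 2) ℝ).det.val := by simp
  change denom (↑(g * h) : GL (Fin 2) ℝ) z =
    denom (g : GL (Fin 2) ℝ) ↑((h : GL (Fin 2) ℝ) • z) * _
  rw [map_mul, denom_cocycle _ _ z.im_ne_zero, coe_smul_of_det_pos hdet]
  rfl

lemma continuous_jFac (g : SL2R) : Continuous (jFac g) := by
  unfold jFac
  fun_prop

lemma continuous_log_jFac (g : SL2R) : Continuous fun z : ℍ => log (jFac g z) := by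
  -- `Log` jumps across the negative reals; `j(g, ·)` avoids them unless it is constant.
  by_cases hc : g.1 1 0 = 0
  · simp only [jFac, hc]
    simpa using continuous_const
  · have hslit (z : ℍ) : jFac g z ∈ slitPlane := by
      refine mem_slitPlane_iff.2 (Or.inr ?_)
      simpa [jFac] using mul_ne_zero hc z.im_ne_zero
    exact ((continuous_jFac g).comp continuous_coe).clog hslit

lemma omegaC_apply_eq (g h : SL2R) (z w : ℍ) : omegaC g h z = omegaC g h w := by
  unfold omegaC
  congr 1
  refine PreconnectedSpace.eq_of_continuous_of_exp_eq_one
    (f := fun u : ℍ => log (jFac g (h • u : ℍ)) + log (jFac h u) - log (jFac (g * h) u)) ?_ ?_ z w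
  · exact ((continuous_log_jFac g).comp (continuous_const_smul h)).add (continuous_log_jFac h)
      |>.sub (continuous_log_jFac (g * h))
  · intro u
    rw [exp_sub, exp_add, exp_log (jFac_ne_zero g _), exp_log (jFac_ne_zero h u),
      exp_log (jFac_ne_zero _ u), jFac_mul,
      div_self (mul_ne_zero (jFac_ne_zero g _) (jFac_ne_zero h u))]

/-- The 2-cocycle identity for `ω`. -/
theorem omegaC_cocycle (g₁ g₂ g₃ : SL2R) (z : ℍ) :
    omegaC g₁ g₂ z + omegaC (g₁ * g₂) g₃ z = omegaC g₁ (g₂ * g₃) z + omegaC g₂ g₃ z := by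
  have hbase := omegaC_apply_eq g₁ g₂ z (g₃ • z)
  simp only [omegaC, mul_smul, ← mul_assoc] at hbase ⊢
  linear_combination hbase
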